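/- arXiv:2601.20492 — 9 statements merged into one kernel-verified Lean document; each statement's English description precedes it below -/
import Mathlib

section
/- Let G be an oriented graph on n vertices admitting a DDM labeling f with max_v |imb(v)| ≤ 1 (imbalance at most 1). Define a new oriented graph G' by adding one new vertex v' with an edge (v',v) for each vertex v of G with imb(v) = -1 and an edge (v,v') for each vertex v with imb(v) = +1. Then G' admits a DDM labeling, namely f'(v') = 1 and f'(v) = f(v) + 1 for v ∈ V(G); moreover every vertex of G' has imbalance 0. -/
open Classical Finset

/-- The weight of vertex `v` under labeling `f` in the digraph with edge relation `E`:
sum of labels of in-neighbors minus sum of labels of out-neighbors. -/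
noncomputable def wt {V : Type*} [Fintype V] (E : V → V → Prop) (f : V → ℤ) (v : V) : ℤ :=
  (∑ u, if E u v then f u else 0) - (∑ u, if E v u then f u else 0)

/-- The imbalance of vertex `v`: in-degree minus out-degree. -/
noncomputable def imb {V : Type*} [Fintype V] (E : V → V → Prop) (v : V) : ℤ :=
  (∑ u, if E u v then (1 : ℤ) else 0) - (∑ u, if E v u then (1 : ℤ) else 0)

theorem imb_one_extension_is_balanced_DDM {V : Type*} [Fintype V] (E : V → V → Prop)
    (horiented : ∀ u v, E u v → ¬ E v u)
    (f : V → ℤ)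
    (hbij : Set.BijOn f Set.univ (Set.Icc 1 (Fintype.card V : ℤ)))
    (hwt : ∀ v, wt E f v = 0)
    (himb : ∀ v, |imb E v| ≤ 1)
    (E' : Option V → Option V → Prop)
    (hE'ss : ∀ u v : V, E' (some u) (some v) ↔ E u v)
    (hE'in : ∀ v : V, E' none (some v) ↔ imb E v = -1)
    (hE'out : ∀ v : V, E' (some v) none ↔ imb E v = 1)
    (hE'nn : ¬ E' none none)
    (f' : Option V → ℤ)
    (hf'none : f' none = 1)
    (hf'some : ∀ v : V, f' (some v) = f v + 1) :
    Set.BijOn f' Set.univ (Set.Icc 1 (Fintype.card V + 1 : ℤ)) ∧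
      (∀ v, wt E' f' v = 0) ∧ (∀ v, imb E' v = 0) := by
  have hcases : ∀ v, imb E v = -1 ∨ imb E v = 0 ∨ imb E v = 1 := by
    intro v
    have := abs_le.mp (himb v)
    omega
  have hmem : ∀ v : V, 1 ≤ f v ∧ f v ≤ (Fintype.card V : ℤ) := by
    intro v
    have := hbij.mapsTo (Set.mem_univ v)
    exact ⟨this.1, this.2⟩
  -- total imbalance is zero
  have hsum_imb : ∑ v, imb E v = 0 := by
    simp only [imb, Finset.sum_sub_distrib]
    have e0 : (∑ v, ∑ u, if E u v then (1:ℤ) else 0)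
        = ∑ v, ∑ u, if E v u then (1:ℤ) else 0 := Finset.sum_comm
    rw [e0, sub_self]
  -- total weight is zero, so in-sums total = out-sums total
  have hT : (∑ v, ∑ u, if E u v then f u else 0)
      = ∑ v, ∑ u, if E v u then f u else 0 := by
    have h0 : ∑ v, wt E f v = 0 := by simp [hwt]
    simp only [wt, Finset.sum_sub_distrib, sub_eq_zero] at h0
    exact h0
  have hsum_imbf : ∑ v, imb E v * f v = 0 := by
    have hv : ∀ v, imb E v * f v
        = (∑ u, if E u v then f v else 0) - (∑ u, if E v u then f v else 0) := by
      intro v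
      simp only [imb, sub_mul, Finset.sum_mul, ite_mul, one_mul, zero_mul]
    rw [Finset.sum_congr rfl fun v _ => hv v, Finset.sum_sub_distrib]
    have e1 : (∑ v, ∑ u, if E u v then f v else 0)
        = ∑ v, ∑ u, if E v u then f u else 0 := Finset.sum_comm
    have e2 : (∑ v, ∑ u, if E v u then f v else 0)
        = ∑ v, ∑ u, if E u v then f u else 0 := Finset.sum_comm
    rw [e1, e2, ← hT, sub_self]
  have key1 : (∑ v, if imb E v = 1 then (1:ℤ) else 0)
      - (∑ v, if imb E v = -1 then (1:ℤ) else 0) = 0 := by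
    rw [← Finset.sum_sub_distrib]
    have : ∀ v ∈ Finset.univ, ((if imb E v = 1 then (1:ℤ) else 0)
        - (if imb E v = -1 then (1:ℤ) else 0)) = imb E v := by
      intro v _
      rcases hcases v with h | h | h <;> simp [h]
    rw [Finset.sum_congr rfl this, hsum_imb]
  have key2 : (∑ v, if imb E v = 1 then f v + 1 else 0)
      - (∑ v, if imb E v = -1 then f v + 1 else 0) = 0 := by
    rw [← Finset.sum_sub_distrib]
    have : ∀ v ∈ Finset.univ, ((if imb E v = 1 then f v + 1 else 0)
        - (if imb E v = -1 then f v + 1 else 0)) = imb E v * (f v + 1) := by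
      intro v _
      rcases hcases v with h | h | h <;> simp [h] <;> ring
    rw [Finset.sum_congr rfl this]
    have : ∑ v, imb E v * (f v + 1) = (∑ v, imb E v * f v) + ∑ v, imb E v := by
      rw [← Finset.sum_add_distrib]
      exact Finset.sum_congr rfl fun v _ => by ring
    rw [this, hsum_imbf, hsum_imb]
    norm_num
  -- splitting sums of the form (if P then a+1 else 0)
  have hsplit : ∀ (g : V → Prop),
      (∑ u, if g u then f u + 1 else 0)
        = (∑ u, if g u then f u else 0) + ∑ u, if g u then (1:ℤ) else 0 := by
    intro g
    rw [← Finset.sum_add_distrib]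
    exact Finset.sum_congr rfl fun u _ => by split <;> simp
  refine ⟨⟨?_, ?_, ?_⟩, ?_, ?_⟩
  · -- maps to
    intro x _
    cases x with
    | none =>
      rw [Set.mem_Icc, hf'none]
      have : (0:ℤ) ≤ (Fintype.card V : ℤ) := Int.natCast_nonneg _
      omega
    | some v =>
      rw [Set.mem_Icc, hf'some]
      have := hmem v
      omega
  · -- injective
    intro x _ y _ hxy
    cases x with
    | none =>
      cases y with
      | none => rfl
      | some v =>
        rw [hf'none, hf'some] at hxy
        have := hmem v
        omega
    | some u =>
      cases y with
      | none =>
        rw [hf'none, hf'some] at hxy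
        have := hmem u
        omega
      | some v =>
        rw [hf'some, hf'some] at hxy
        have : f u = f v := by omega
        exact congrArg some (hbij.injOn (Set.mem_univ u) (Set.mem_univ v) this)
  · -- surjective
    intro m hm
    rw [Set.mem_Icc] at hm
    by_cases h1 : m = 1
    · exact ⟨none, Set.mem_univ _, by rw [hf'none, h1]⟩
    · have : m - 1 ∈ Set.Icc 1 (Fintype.card V : ℤ) := by
        rw [Set.mem_Icc]; omega
      obtain ⟨v, -, hv⟩ := hbij.surjOn this
      exact ⟨some v, Set.mem_univ _, by rw [hf'some, hv]; ring⟩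
  · -- weights
    intro x
    cases x with
    | none =>
      show ((∑ u : Option V, if E' u none then f' u else 0)
          - ∑ u : Option V, if E' none u then f' u else 0) = 0
      rw [Fintype.sum_option, Fintype.sum_option]
      simp only [hE'in, hE'out, hf'some, if_neg hE'nn]
      simpa using key2
    | some w =>
      show ((∑ u : Option V, if E' u (some w) then f' u else 0)
          - ∑ u : Option V, if E' (some w) u then f' u else 0) = 0
      rw [Fintype.sum_option, Fintype.sum_option]
      simp only [hE'in, hE'out, hE'ss, hf'none, hf'some]
      rw [hsplit (fun u => E u w), hsplit (fun u => E w u)]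
      have h1 := hwt w
      simp only [wt] at h1
      rcases hcases w with h | h | h <;>
        (have h2 := h; simp only [imb] at h2; simp only [h]; norm_num at h2 ⊢ <;> try linarith)
  · -- imbalances
    intro x
    cases x with
    | none =>
      show ((∑ u : Option V, if E' u none then (1:ℤ) else 0)
          - ∑ u : Option V, if E' none u then (1:ℤ) else 0) = 0
      rw [Fintype.sum_option, Fintype.sum_option]
      simp only [hE'in, hE'out, if_neg hE'nn]
      simpa using key1
    | some w =>
      show ((∑ u : Option V, if E' u (some w) then (1:ℤ) else 0)
          - ∑ u : Option V, if E' (some w) u then (1:ℤ) else 0) = 0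
      rw [Fintype.sum_option, Fintype.sum_option]
      simp only [hE'in, hE'out, hE'ss, hf'none]
      rcases hcases w with h | h | h <;>
        (have h2 := h; simp only [imb] at h2; simp only [h]; norm_num at h2 ⊢ <;> try linarith)
end

section
/- Let G be an oriented graph on n vertices with a DDM labeling g, and let u ∈ V(G) with g(u) = n. Let H be an oriented graph on m vertices with a DDM labeling h in which every vertex has imbalance 0, and let w ∈ V(H) with h(w) = 1. Form the vertex coalescence K of G and H by identifying u with w (i.e., K has vertex set (V(G) ∪ V(H)) \ {w}, keeps all edges of G and of H not incident to w, and replaces each edge (w,x) of H by (u,x) and each (x,w) by (x,u)). Then the labeling f with f(v) = g(v) for v ∈ V(G) and f(v) = h(v) + n - 1 for v ∈ V(H) \ {w} is a DDM labeling of K; in particular K is a DDMOG on n + m - 1 vertices. -/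
open Classical Finset

lemma sum_ite_add' {α : Type*} [Fintype α] (P : α → Prop) [DecidablePred P] (h : α → ℤ) (c : ℤ) :
    ∑ y, (if P y then h y + c else 0)
      = (∑ y, if P y then h y else 0) + c * (∑ y, if P y then (1:ℤ) else 0) := by
  rw [Finset.mul_sum, ← Finset.sum_add_distrib]
  refine Finset.sum_congr rfl fun y _ => ?_
  split <;> ring

theorem vertex_coalescence_DDM {V W : Type*} [Fintype V] [Fintype W] [DecidableEq W]
    (EG : V → V → Prop) (EH : W → W → Prop)
    (horG : ∀ u v, EG u v → ¬ EG v u)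
    (horH : ∀ u v, EH u v → ¬ EH v u)
    (g : V → ℤ)
    (hgbij : Set.BijOn g Set.univ (Set.Icc 1 (Fintype.card V : ℤ)))
    (hgwt : ∀ v, wt EG g v = 0)
    (h : W → ℤ)
    (hhbij : Set.BijOn h Set.univ (Set.Icc 1 (Fintype.card W : ℤ)))
    (hhwt : ∀ v, wt EH h v = 0)
    (hbal : ∀ v, imb EH v = 0)
    (u : V) (hu : g u = (Fintype.card V : ℤ))
    (w : W) (hw : h w = 1)
    (EK : (V ⊕ {x : W // x ≠ w}) → (V ⊕ {x : W // x ≠ w}) → Prop)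
    (hKGG : ∀ a b : V, EK (Sum.inl a) (Sum.inl b) ↔ EG a b)
    (hKHH : ∀ x y : {x : W // x ≠ w}, EK (Sum.inr x) (Sum.inr y) ↔ EH x.1 y.1)
    (hKGH : ∀ (a : V) (x : {x : W // x ≠ w}), EK (Sum.inl a) (Sum.inr x) ↔ (a = u ∧ EH w x.1))
    (hKHG : ∀ (a : V) (x : {x : W // x ≠ w}), EK (Sum.inr x) (Sum.inl a) ↔ (a = u ∧ EH x.1 w))
    (f : (V ⊕ {x : W // x ≠ w}) → ℤ)
    (hfG : ∀ v : V, f (Sum.inl v) = g v)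
    (hfH : ∀ x : {x : W // x ≠ w}, f (Sum.inr x) = h x.1 + (Fintype.card V : ℤ) - 1) :
    Set.BijOn f Set.univ (Set.Icc 1 ((Fintype.card V : ℤ) + (Fintype.card W : ℤ) - 1)) ∧
      ∀ v, wt EK f v = 0 := by
  have hnV : 1 ≤ (Fintype.card V : ℤ) := by
    have : 0 < Fintype.card V := Fintype.card_pos_iff.mpr ⟨u⟩
    exact_mod_cast this
  have hnW : 1 ≤ (Fintype.card W : ℤ) := by
    have : 0 < Fintype.card W := Fintype.card_pos_iff.mpr ⟨w⟩
    exact_mod_cast this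
  have hgmem : ∀ v : V, 1 ≤ g v ∧ g v ≤ (Fintype.card V : ℤ) := fun v => hgbij.1 (Set.mem_univ v)
  have hhmem : ∀ x : W, 1 ≤ h x ∧ h x ≤ (Fintype.card W : ℤ) := fun x => hhbij.1 (Set.mem_univ x)
  have hh2 : ∀ x : W, x ≠ w → 2 ≤ h x := by
    intro x hx
    rcases hhmem x with ⟨h1, _⟩
    rcases lt_or_eq_of_le h1 with h' | h'
    · omega
    · exact absurd (hhbij.2.1 (Set.mem_univ x) (Set.mem_univ w) (by rw [hw, ← h'])) hx
  have sum_sub : ∀ F : W → ℤ, ∑ x : {x : W // x ≠ w}, F x.1 = (∑ y, F y) - F w := by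
    intro F
    rw [← Finset.sum_subtype (Finset.univ.erase w) (by simp) F,
      Finset.sum_erase_eq_sub (Finset.mem_univ w)]
  have hEHww : ¬ EH w w := fun hc => horH w w hc hc
  constructor
  · refine ⟨?_, ?_, ?_⟩
    · rintro (v | x) -
      · rcases hgmem v with ⟨h1, h2⟩
        simp only [Set.mem_Icc, hfG]
        omega
      · rcases hhmem x.1 with ⟨h1, h2⟩
        simp only [Set.mem_Icc, hfH]
        omega
    · rintro (a | x) - (b | y) - hfe
      · rw [hfG, hfG] at hfe
        exact congrArg Sum.inl (hgbij.2.1 (Set.mem_univ a) (Set.mem_univ b) hfe)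
      · rw [hfG, hfH] at hfe
        have := (hgmem a).2
        have := hh2 y.1 y.2
        exact absurd hfe (by omega)
      · rw [hfH, hfG] at hfe
        have := (hgmem b).2
        have := hh2 x.1 x.2
        exact absurd hfe (by omega)
      · rw [hfH, hfH] at hfe
        have : h x.1 = h y.1 := by omega
        have := hhbij.2.1 (Set.mem_univ x.1) (Set.mem_univ y.1) this
        exact congrArg Sum.inr (Subtype.ext this)
    · rintro t ht
      simp only [Set.mem_Icc] at ht
      by_cases hc : t ≤ (Fintype.card V : ℤ)
      · obtain ⟨v, -, hv⟩ := hgbij.2.2 (show t ∈ Set.Icc 1 (Fintype.card V : ℤ) by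
          simp only [Set.mem_Icc]; omega)
        exact ⟨Sum.inl v, Set.mem_univ _, by rw [hfG, hv]⟩
      · obtain ⟨y, -, hy⟩ := hhbij.2.2
          (show t - (Fintype.card V : ℤ) + 1 ∈ Set.Icc 1 (Fintype.card W : ℤ) by
            simp only [Set.mem_Icc]; omega)
        have hyw : y ≠ w := by intro e; rw [e, hw] at hy; omega
        exact ⟨Sum.inr ⟨y, hyw⟩, Set.mem_univ _, by rw [hfH]; simp only; omega⟩
  · have hsum1 : ∀ (P : Prop) [Decidable P],
        (∑ a : V, if a = u ∧ P then g a else 0) = if P then (Fintype.card V : ℤ) else 0 := by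
      intro P _
      by_cases hP : P
      · simp [hP, Finset.sum_ite_eq', hu]
      · simp [hP]
    rintro (v | x)
    · rw [wt, Fintype.sum_sum_type, Fintype.sum_sum_type]
      simp only [hKGG, hKHG, hKGH, hfG, hfH]
      by_cases hv : v = u
      · subst hv
        simp only [true_and, eq_self_iff_true]
        rw [sum_sub (fun y => if EH y w then h y + (Fintype.card V : ℤ) - 1 else 0),
          sum_sub (fun y => if EH w y then h y + (Fintype.card V : ℤ) - 1 else 0)]
        simp only [hEHww, if_false]
        have e1 : ∀ y : W, (if EH y w then h y + (Fintype.card V : ℤ) - 1 else 0)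
            = (if EH y w then h y + ((Fintype.card V : ℤ) - 1) else 0) := by
          intro y; split <;> ring
        have e2 : ∀ y : W, (if EH w y then h y + (Fintype.card V : ℤ) - 1 else 0)
            = (if EH w y then h y + ((Fintype.card V : ℤ) - 1) else 0) := by
          intro y; split <;> ring
        simp only [e1, e2]
        rw [sum_ite_add' (fun y => EH y w) h ((Fintype.card V : ℤ) - 1),
          sum_ite_add' (fun y => EH w y) h ((Fintype.card V : ℤ) - 1)]
        have H1 := hgwt v; rw [wt] at H1
        have H2 := hhwt w; rw [wt] at H2
        have H3 := hbal w; rw [imb] at H3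
        linear_combination H1 + H2 + ((Fintype.card V : ℤ) - 1) * H3
      · simp only [hv, false_and, if_false, Finset.sum_const_zero, add_zero]
        have H1 := hgwt v; rw [wt] at H1
        linarith
    · rw [wt, Fintype.sum_sum_type, Fintype.sum_sum_type]
      simp only [hKHH, hKGH, hKHG, hfG, hfH]
      rw [hsum1, hsum1]
      rw [sum_sub (fun y => if EH y x.1 then h y + (Fintype.card V : ℤ) - 1 else 0),
        sum_sub (fun y => if EH x.1 y then h y + (Fintype.card V : ℤ) - 1 else 0)]
      have e1 : ∀ y : W, (if EH y x.1 then h y + (Fintype.card V : ℤ) - 1 else 0)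
          = (if EH y x.1 then h y + ((Fintype.card V : ℤ) - 1) else 0) := by
        intro y; split <;> ring
      have e2 : ∀ y : W, (if EH x.1 y then h y + (Fintype.card V : ℤ) - 1 else 0)
          = (if EH x.1 y then h y + ((Fintype.card V : ℤ) - 1) else 0) := by
        intro y; split <;> ring
      simp only [e1, e2]
      rw [sum_ite_add' (fun y => EH y x.1) h ((Fintype.card V : ℤ) - 1),
        sum_ite_add' (fun y => EH x.1 y) h ((Fintype.card V : ℤ) - 1)]
      have H2 := hhwt x.1; rw [wt] at H2
      have H3 := hbal x.1; rw [imb] at H3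
      simp only [hw]
      split_ifs <;> linear_combination H2 + ((Fintype.card V : ℤ) - 1) * H3
end

section
/- For every integer n ≥ 5, there exists a connected oriented graph on n vertices admitting a difference distance magic labeling. -/
open Classical Finset

/-- Block index of a vertex. -/
def bfun (n : ℕ) (v : Fin n) : ℕ := min (v.val + n % 2) (n - 1 - v.val)

/-- Arc relation: arcs go from block `j` to block `(j+1) % ((n+1)/2)`. -/
def Erel (n : ℕ) (u v : Fin n) : Prop :=
  (bfun n u + 1) % ((n + 1) / 2) = bfun n v

lemma bfun_lt (n : ℕ) (hn : 5 ≤ n) (v : Fin n) : bfun n v < (n + 1) / 2 := by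
  have := v.isLt
  unfold bfun
  omega

lemma bfun_w (n : ℕ) (hn : 5 ≤ n) (j : ℕ) (hj : j < (n + 1) / 2) :
    bfun n ⟨n - 1 - j, by omega⟩ = j := by
  unfold bfun
  simp only
  omega

lemma modsucc (M k : ℕ) (hk : k < M) :
    (k + 1) % M = if k + 1 = M then 0 else k + 1 := by
  split_ifs with h
  · rw [h, Nat.mod_self]
  · exact Nat.mod_eq_of_lt (by omega)

lemma sum_single {V : Type*} [Fintype V] (P : V → Prop) [DecidablePred P] (g : V → ℤ) (a : V)
    (h : ∀ u, P u ↔ u = a) :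
    (∑ u, if P u then g u else 0) = g a := by
  have : ∀ u, (if P u then g u else 0) = (if u = a then g u else 0) := by
    intro u
    simp only [h]
  simp only [this]
  simp [Finset.sum_ite_eq']

lemma sum_pair {V : Type*} [Fintype V] (P : V → Prop) [DecidablePred P] (g : V → ℤ) (a c : V)
    (hac : a ≠ c) (h : ∀ u, P u ↔ (u = a ∨ u = c)) :
    (∑ u, if P u then g u else 0) = g a + g c := by
  have : ∀ u, (if P u then g u else 0) =
      (if u = a then g u else 0) + (if u = c then g u else 0) := by
    intro u
    by_cases h1 : u = a
    · subst h1
      simp [h, hac]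
    · by_cases h2 : u = c
      · subst h2
        simp [h, h1]
      · simp [h, h1, h2]
  simp only [this]
  rw [Finset.sum_add_distrib]
  simp [Finset.sum_ite_eq']

lemma blocksum (n : ℕ) (hn : 5 ≤ n) (j : ℕ) (hj : j < (n + 1) / 2) :
    (∑ u : Fin n, if bfun n u = j then ((u.val : ℤ) + 1) else 0) =
      (n : ℤ) + 1 - ((n % 2 : ℕ) : ℤ) := by
  by_cases hpar : n % 2 = 0
  · -- even: block j = {j, n-1-j}
    have hj2 : j < n := by omega
    set a : Fin n := ⟨j, by omega⟩ with ha
    set c : Fin n := ⟨n - 1 - j, by omega⟩ with hc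
    have hac : a ≠ c := by
      simp only [ha, hc, ne_eq, Fin.mk.injEq]
      omega
    have hkey : ∀ u : Fin n, (bfun n u = j) ↔ (u = a ∨ u = c) := by
      intro u
      have := u.isLt
      simp only [bfun, ha, hc, Fin.ext_iff]
      omega
    rw [sum_pair _ _ a c hac hkey]
    simp only [ha, hc]
    simp
    omega
  · by_cases hj0 : j = 0
    · -- odd, block 0 = {n-1}
      subst hj0
      set a : Fin n := ⟨n - 1, by omega⟩ with ha
      have hkey : ∀ u : Fin n, (bfun n u = 0) ↔ u = a := by
        intro u
        have := u.isLt
        simp only [bfun, ha, Fin.ext_iff]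
        omega
      rw [sum_single _ _ a hkey]
      simp only [ha]
      simp
      omega
    · -- odd, block j = {j-1, n-1-j}
      set a : Fin n := ⟨j - 1, by omega⟩ with ha
      set c : Fin n := ⟨n - 1 - j, by omega⟩ with hc
      have hac : a ≠ c := by
        simp only [ha, hc, ne_eq, Fin.mk.injEq]
        omega
      have hkey : ∀ u : Fin n, (bfun n u = j) ↔ (u = a ∨ u = c) := by
        intro u
        have := u.isLt
        simp only [bfun, ha, hc, Fin.ext_iff]
        omega
      rw [sum_pair _ _ a c hac hkey]
      simp only [ha, hc]
      simp
      omega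

lemma Eirr (n : ℕ) (hn : 5 ≤ n) (v : Fin n) : ¬ Erel n v v := by
  have hv := bfun_lt n hn v
  unfold Erel
  rw [modsucc _ _ hv]
  split_ifs <;> omega

theorem exists_connected_DDMOG (n : ℕ) (hn : 5 ≤ n) :
    ∃ E : Fin n → Fin n → Prop,
      (∀ u v, E u v → ¬ E v u) ∧
      (∃ G : SimpleGraph (Fin n), (∀ u v, G.Adj u v ↔ (E u v ∨ E v u)) ∧ G.Connected) ∧
      (∃ f : Fin n → ℤ,
        Set.BijOn f Set.univ (Set.Icc 1 (n : ℤ)) ∧ ∀ v, wt E f v = 0) := by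
  have hM : 3 ≤ (n + 1) / 2 := by omega
  refine ⟨Erel n, ?_, ?_, ?_⟩
  · -- oriented
    intro u v huv hvu
    have hu := bfun_lt n hn u
    have hv := bfun_lt n hn v
    unfold Erel at huv hvu
    rw [modsucc _ _ hu] at huv
    rw [modsucc _ _ hv] at hvu
    split_ifs at huv hvu <;> omega
  · -- connected
    refine ⟨SimpleGraph.fromRel (Erel n), ?_, ?_⟩
    · intro u v
      rw [SimpleGraph.fromRel_adj]
      constructor
      · exact fun h => h.2
      · intro h
        refine ⟨?_, h⟩
        rintro rfl
        rcases h with h | h <;> exact Eirr n hn u h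
    · set G := SimpleGraph.fromRel (Erel n) with hG
      have hadj : ∀ u v, Erel n u v → u ≠ v → G.Adj u v := by
        intro u v h hne
        rw [hG, SimpleGraph.fromRel_adj]
        exact ⟨hne, Or.inl h⟩
      have hW : ∀ j, (hj : j < (n + 1) / 2) →
          G.Reachable ⟨n - 1, by omega⟩ ⟨n - 1 - j, by omega⟩ := by
        intro j
        induction j with
        | zero => intro hj; exact SimpleGraph.Reachable.refl _
        | succ j ih =>
          intro hj
          refine (ih (by omega)).trans (SimpleGraph.Adj.reachable ?_)
          apply hadj
          · unfold Erel
            rw [bfun_w n hn j (by omega), bfun_w n hn (j + 1) hj]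
            exact Nat.mod_eq_of_lt hj
          · simp only [ne_eq, Fin.mk.injEq]
            omega
      have hreach : ∀ u : Fin n, G.Reachable ⟨n - 1, by omega⟩ u := by
        intro u
        have hbu := bfun_lt n hn u
        by_cases h0 : bfun n u = 0
        · refine (hW ((n + 1) / 2 - 1) (by omega)).trans (SimpleGraph.Adj.reachable ?_)
          apply hadj
          · unfold Erel
            rw [bfun_w n hn ((n + 1) / 2 - 1) (by omega), h0]
            have h1 : (n + 1) / 2 - 1 + 1 = (n + 1) / 2 := by omega
            rw [h1, Nat.mod_self]
          · intro heq
            have := bfun_w n hn ((n + 1) / 2 - 1) (by omega)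
            rw [heq, h0] at this
            omega
        · refine (hW (bfun n u - 1) (by omega)).trans (SimpleGraph.Adj.reachable ?_)
          apply hadj
          · unfold Erel
            rw [bfun_w n hn (bfun n u - 1) (by omega)]
            have h1 : bfun n u - 1 + 1 = bfun n u := by omega
            rw [h1]
            exact Nat.mod_eq_of_lt hbu
          · intro heq
            have := bfun_w n hn (bfun n u - 1) (by omega)
            rw [heq] at this
            omega
      rw [SimpleGraph.connected_iff]
      exact ⟨fun u v => (hreach u).symm.trans (hreach v), ⟨⟨0, by omega⟩⟩⟩
  · -- labeling
    refine ⟨fun v => (v.val : ℤ) + 1, ⟨?_, ?_, ?_⟩, ?_⟩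
    · intro v _
      have := v.isLt
      simp only [Set.mem_Icc]
      omega
    · intro u _ v _ h
      simp only at h
      apply Fin.ext
      omega
    · intro y hy
      simp only [Set.mem_Icc] at hy
      refine ⟨⟨(y - 1).toNat, by omega⟩, Set.mem_univ _, ?_⟩
      simp only
      omega
    · intro v
      have hbv := bfun_lt n hn v
      set p := if bfun n v = 0 then (n + 1) / 2 - 1 else bfun n v - 1 with hp
      have hpM : p < (n + 1) / 2 := by
        rw [hp]; split <;> omega
      have hin : ∀ u : Fin n, Erel n u v ↔ bfun n u = p := by
        intro u
        have hbu := bfun_lt n hn u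
        unfold Erel
        rw [modsucc _ _ hbu, hp]
        split_ifs <;> omega
      have hout : ∀ u : Fin n, Erel n v u ↔ bfun n u = (bfun n v + 1) % ((n + 1) / 2) := by
        intro u
        unfold Erel
        exact eq_comm
      have hsucclt : (bfun n v + 1) % ((n + 1) / 2) < (n + 1) / 2 :=
        Nat.mod_lt _ (by omega)
      unfold wt
      have hA : (∑ u : Fin n, if Erel n u v then ((u.val : ℤ) + 1) else 0) =
          (n : ℤ) + 1 - ((n % 2 : ℕ) : ℤ) := by
        have heq : (∑ u : Fin n, if Erel n u v then ((u.val : ℤ) + 1) else 0) =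
            ∑ u : Fin n, if bfun n u = p then ((u.val : ℤ) + 1) else 0 :=
          Finset.sum_congr rfl (fun u _ => by simp only [hin])
        rw [heq]
        exact blocksum n hn p hpM
      have hB : (∑ u : Fin n, if Erel n v u then ((u.val : ℤ) + 1) else 0) =
          (n : ℤ) + 1 - ((n % 2 : ℕ) : ℤ) := by
        have heq : (∑ u : Fin n, if Erel n v u then ((u.val : ℤ) + 1) else 0) =
            ∑ u : Fin n, if bfun n u = (bfun n v + 1) % ((n + 1) / 2)
              then ((u.val : ℤ) + 1) else 0 :=
          Finset.sum_congr rfl (fun u _ => by simp only [hout])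
        rw [heq]
        exact blocksum n hn _ hsucclt
      rw [hA, hB, sub_self]
end

section
/- For every positive integer k, the windmill of k wheels W_4^{(k)} (on n = 4k+1 vertices: a central vertex v joined to all four rim vertices v_{i1},v_{i2},v_{i3},v_{i4} of each of k copies of the 4-cycle v_{i1}v_{i2}v_{i4}v_{i3}) admits an orientation with a DDM labeling. Specifically, orienting edges as v_{i1}→v_{i2}, v_{i1}→v_{i3}, v_{i4}→v_{i3}, v_{i4}→v_{i2}, v→v_{i1}, v_{i2}→v, v→v_{i4}, v_{i3}→v, and labeling f(v)=n, f(v_{i1})=2i-1, f(v_{i2})=2i, f(v_{i3})=n-2i, f(v_{i4})=n+1-2i makes every vertex have weight 0, and f is a bijection onto {1,...,n}. -/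
open Classical Finset

/-- The orientation of the windmill of `k` wheels `W₄^(k)`.  The vertex `none` is the
central vertex; `some (i, j)` is the rim vertex `v_{i,j+1}` of the `i`-th wheel. -/
def windE (k : ℕ) : Option (Fin k × Fin 4) → Option (Fin k × Fin 4) → Prop
  | none, some (_, j) => j = 0 ∨ j = 3
  | some (_, j), none => j = 1 ∨ j = 2
  | some (i, j), some (i', j') =>
      i = i' ∧ ((j = 0 ∧ j' = 1) ∨ (j = 0 ∧ j' = 2) ∨ (j = 3 ∧ j' = 2) ∨ (j = 3 ∧ j' = 1))
  | none, none => False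

/-- The labeling of the windmill of `k` wheels, where `n = 4k + 1`. -/
def windF (k : ℕ) : Option (Fin k × Fin 4) → ℤ
  | none => 4 * k + 1
  | some (i, j) =>
      if j = 0 then 2 * ((i : ℤ) + 1) - 1
      else if j = 1 then 2 * ((i : ℤ) + 1)
      else if j = 2 then (4 * k + 1) - 2 * ((i : ℤ) + 1)
      else (4 * k + 1) + 1 - 2 * ((i : ℤ) + 1)

theorem windmill_DDM (k : ℕ) (hk : 0 < k) :
    (∀ u v, windE k u v → ¬ windE k v u) ∧
    Set.BijOn (windF k) Set.univ (Set.Icc 1 (4 * k + 1 : ℤ)) ∧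
    ∀ v, wt (windE k) (windF k) v = 0 := by
  have hmap : Set.MapsTo (windF k) Set.univ (Set.Icc 1 (4 * k + 1 : ℤ)) := by
    rintro (_|⟨i,j⟩) -
    · simp [windF]
    · have := i.isLt
      fin_cases j <;> simp [windF] <;> omega
  have hinj : Set.InjOn (windF k) Set.univ := by
    rintro (_|⟨i,j⟩) - (_|⟨i',j'⟩) - h
    · rfl
    · have := i'.isLt; fin_cases j' <;> simp [windF] at h <;> omega
    · have := i.isLt; fin_cases j <;> simp [windF] at h <;> omega
    · have := i.isLt; have := i'.isLt
      fin_cases j <;> fin_cases j' <;>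
        simp only [windF, Option.some.injEq, Prod.mk.injEq, Fin.ext_iff] at h ⊢ <;>
        simp at h ⊢ <;> omega
  refine ⟨?_, ⟨hmap, hinj, ?_⟩, ?_⟩
  · rintro (_|⟨i,j⟩) (_|⟨i',j'⟩) h h' <;>
      simp only [windE, Fin.ext_iff] at h h' <;> omega
  · have himg : windF k '' Set.univ = Set.Icc 1 (4 * k + 1 : ℤ) := by
      apply Set.eq_of_subset_of_ncard_le (Set.image_subset_iff.mpr hmap) _ (Set.finite_Icc _ _)
      rw [Set.ncard_image_of_injOn hinj, Set.ncard_univ, Nat.card_eq_fintype_card,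
        Set.ncard_eq_toFinset_card', Set.toFinset_Icc, Int.card_Icc]
      simp
      omega
    exact fun x hx => himg ▸ hx
  · rintro (_|⟨i0,j0⟩)
    · simp [wt, windE, windF, Fintype.sum_option, Fintype.sum_prod_type, Fin.sum_univ_four]
    · fin_cases j0 <;>
        simp [wt, windE, windF, Fintype.sum_option, Fintype.sum_prod_type,
          Fin.sum_univ_four, Finset.sum_add_distrib, Finset.sum_ite_eq, Finset.sum_ite_eq']
end

section
/- Let G_1,...,G_k be oriented graphs on n_1,...,n_k vertices respectively, each admitting a DDM labeling, such that for each i ≥ 2 every vertex of G_i has imbalance 0. Then the disjoint union G = G_1 ∪ ... ∪ G_k admits a DDM labeling; specifically f(u) = f_1(u) for u ∈ G_1 and f(u) = f_i(u) + (n_1 + ... + n_{i-1}) for u ∈ G_i (i ≥ 2) is a DDM labeling of G. -/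
open Classical Finset

theorem disjoint_union_DDM {k : ℕ} (V : Fin k → Type*) [∀ i, Fintype (V i)]
    (E : ∀ i, V i → V i → Prop)
    (hor : ∀ i, ∀ u v, E i u v → ¬ E i v u)
    (g : ∀ i, V i → ℤ)
    (hgbij : ∀ i, Set.BijOn (g i) Set.univ (Set.Icc 1 (Fintype.card (V i) : ℤ)))
    (hgwt : ∀ i, ∀ v, wt (E i) (g i) v = 0)
    (hbal : ∀ i : Fin k, (i : ℕ) ≠ 0 → ∀ v, imb (E i) v = 0)
    (E' : (Σ i, V i) → (Σ i, V i) → Prop)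
    (hE'same : ∀ (i : Fin k) (a b : V i), E' ⟨i, a⟩ ⟨i, b⟩ ↔ E i a b)
    (hE'diff : ∀ a b : Σ i, V i, a.1 ≠ b.1 → ¬ E' a b)
    (f : (Σ i, V i) → ℤ)
    (hf : ∀ (i : Fin k) (u : V i),
      f ⟨i, u⟩ = g i u + ∑ j ∈ Finset.univ.filter (fun j => j < i), (Fintype.card (V j) : ℤ)) :
    Set.BijOn f Set.univ (Set.Icc 1 (Fintype.card (Σ i, V i) : ℤ)) ∧
      ∀ v, wt E' f v = 0 := by
  classical
  set n : Fin k → ℤ := fun j => (Fintype.card (V j) : ℤ) with hn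
  set c : Fin k → ℤ := fun i => ∑ j ∈ Finset.univ.filter (fun j => j < i), n j with hc
  have hnpos : ∀ j, 0 ≤ n j := fun j => Int.natCast_nonneg _
  have hcnonneg : ∀ i, 0 ≤ c i := fun i =>
    Finset.sum_nonneg fun j _ => hnpos j
  have hbound : ∀ i (u : V i), 1 ≤ g i u ∧ g i u ≤ n i := by
    intro i u
    have := (hgbij i).mapsTo (Set.mem_univ u)
    simpa [Set.mem_Icc] using this
  have hNsum : (Fintype.card (Σ i, V i) : ℤ) = ∑ j, n j := by
    rw [Fintype.card_sigma]
    push_cast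
    rfl
  have hinsert : ∀ i : Fin k,
      ∑ j ∈ insert i (Finset.univ.filter (fun j => j < i)), n j = c i + n i := by
    intro i
    rw [Finset.sum_insert (by simp)]
    ring
  have hmono : ∀ i i' : Fin k, i < i' → c i + n i ≤ c i' := by
    intro i i' h
    rw [← hinsert i]
    apply Finset.sum_le_sum_of_subset_of_nonneg
    · intro j hj
      simp only [Finset.mem_insert, Finset.mem_filter, Finset.mem_univ, true_and] at hj ⊢
      rcases hj with rfl | hj
      · exact h
      · exact hj.trans h
    · exact fun j _ _ => hnpos j
  have hctop : ∀ i : Fin k, c i + n i ≤ ∑ j, n j := by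
    intro i
    rw [← hinsert i]
    exact Finset.sum_le_sum_of_subset_of_nonneg (Finset.subset_univ _)
      (fun j _ _ => hnpos j)
  have hinj : Function.Injective f := by
    have key : ∀ (i i' : Fin k) (u : V i) (u' : V i'), i < i' →
        f ⟨i, u⟩ < f ⟨i', u'⟩ := by
      intro i i' u u' h
      rw [hf, hf]
      have h1 := (hbound i u).2
      have h2 := (hbound i' u').1
      have h3 := hmono i i' h
      show g i u + c i < g i' u' + c i'
      linarith
    rintro ⟨i, u⟩ ⟨i', u'⟩ h
    rcases lt_trichotomy i i' with hlt | heq | hlt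
    · exact absurd h (ne_of_lt (key _ _ _ _ hlt))
    · subst heq
      rw [hf, hf] at h
      have : g i u = g i u' := by
        have : g i u + c i = g i u' + c i := h
        linarith
      have := (hgbij i).injOn (Set.mem_univ u) (Set.mem_univ u') this
      subst this
      rfl
    · exact absurd h.symm (ne_of_lt (key _ _ _ _ hlt))
  have hmem : ∀ (i : Fin k) (u : V i),
      f ⟨i, u⟩ ∈ Set.Icc 1 (Fintype.card (Σ i, V i) : ℤ) := by
    intro i u
    rw [hf]
    have h1 := (hbound i u).1
    have h2 := (hbound i u).2
    have h3 := hcnonneg i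
    have h4 := hctop i
    rw [Set.mem_Icc, hNsum]
    constructor <;> [skip; skip] <;> show _ ≤ _ <;>
      first
        | (show (1:ℤ) ≤ g i u + c i; linarith)
        | (show g i u + c i ≤ ∑ j, n j; linarith)
  have himg : Finset.image f Finset.univ = Finset.Icc 1 (Fintype.card (Σ i, V i) : ℤ) := by
    apply Finset.eq_of_subset_of_card_le
    · intro x hx
      simp only [Finset.mem_image, Finset.mem_univ, true_and] at hx
      obtain ⟨⟨i, u⟩, rfl⟩ := hx
      have := hmem i u
      rwa [Set.mem_Icc, ← Finset.mem_Icc] at this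
    · rw [Finset.card_image_of_injective _ hinj, Finset.card_univ, Int.card_Icc]
      simp
  constructor
  · refine ⟨fun x _ => ?_, hinj.injOn, fun y hy => ?_⟩
    · obtain ⟨i, u⟩ := x
      exact hmem i u
    · rw [← Finset.coe_Icc, ← himg] at hy
      simp only [Finset.coe_image, Finset.coe_univ] at hy
      simpa using hy
  · rintro ⟨i, a⟩
    -- collapse sigma sums
    have hcol : ∀ F : (Σ j, V j) → ℤ, (∀ j (u : V j), j ≠ i → F ⟨j, u⟩ = 0) →
        ∑ x : Σ j, V j, F x = ∑ u : V i, F ⟨i, u⟩ := by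
      intro F hF
      rw [← Finset.univ_sigma_univ, Finset.sum_sigma]
      rw [Finset.sum_eq_single i]
      · intro j _ hj
        exact Finset.sum_eq_zero fun u _ => hF j u hj
      · simp
    have hin : ∑ x : Σ j, V j, (if E' x ⟨i, a⟩ then f x else 0)
        = ∑ u : V i, (if E i u a then g i u + c i else 0) := by
      rw [hcol _ (fun j u hj => by rw [if_neg (hE'diff ⟨j, u⟩ ⟨i, a⟩ hj)])]
      apply Finset.sum_congr rfl
      intro u _
      by_cases h : E i u a
      · rw [if_pos ((hE'same i u a).2 h), if_pos h, hf]
      · rw [if_neg (fun h' => h ((hE'same i u a).1 h')), if_neg h]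
    have hout : ∑ x : Σ j, V j, (if E' ⟨i, a⟩ x then f x else 0)
        = ∑ u : V i, (if E i a u then g i u + c i else 0) := by
      rw [hcol _ (fun j u hj => by rw [if_neg (hE'diff ⟨i, a⟩ ⟨j, u⟩ (fun h => hj h.symm))])]
      apply Finset.sum_congr rfl
      intro u _
      by_cases h : E i a u
      · rw [if_pos ((hE'same i a u).2 h), if_pos h, hf]
      · rw [if_neg (fun h' => h ((hE'same i a u).1 h')), if_neg h]
    have hsplit : ∀ (P : V i → Prop) (_ : DecidablePred P),
        ∑ u, (if P u then g i u + c i else 0)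
          = (∑ u, if P u then g i u else 0) + c i * (∑ u, if P u then (1:ℤ) else 0) := by
      intro P _
      rw [Finset.mul_sum, ← Finset.sum_add_distrib]
      apply Finset.sum_congr rfl
      intro u _
      by_cases h : P u <;> simp [h]
    have : wt E' f ⟨i, a⟩ = wt (E i) (g i) a + c i * imb (E i) a := by
      rw [wt, hin, hout, hsplit _ (fun u => Classical.dec _),
        hsplit _ (fun u => Classical.dec _), wt, imb]
      ring
    rw [this, hgwt i a]
    by_cases hi : (i : ℕ) = 0
    · have hcz : c i = 0 := by
        apply Finset.sum_eq_zero
        intro j hj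
        simp only [Finset.mem_filter, Finset.mem_univ, true_and] at hj
        exact absurd (Fin.lt_def.1 hj) (by omega)
      rw [hcz]; ring
    · rw [hbal i hi a]; ring
end

section
/- Let G be an oriented graph on n vertices with DDM labeling g, and let H be an oriented graph on m vertices with a bijective labeling h: V(H) → {n+1,...,n+m} such that k = max_{v ∈ H} |wt_h(v)| ≤ n, and for each 0 ≤ i ≤ k, Σ_{v: wt_h(v)=i} h(v) = Σ_{v: wt_h(v)=-i} h(v). Form the weighted sum G ⊕ H: take the disjoint union of G and H and, for each 1 ≤ i ≤ n, add an edge from the vertex v_i of G with g(v_i)=i to each vertex u of H with wt_h(u) = -i, and an edge from each vertex u of H with wt_h(u) = i to v_i. Then the labeling f equal to g on V(G) and h on V(H) is a DDM labeling of G ⊕ H, which is thus a DDMOG on n+m vertices. -/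
open Classical Finset

theorem weighted_sum_DDM {V W : Type*} [Fintype V] [Fintype W]
    (EG : V → V → Prop) (EH : W → W → Prop)
    (horG : ∀ u v, EG u v → ¬ EG v u)
    (horH : ∀ u v, EH u v → ¬ EH v u)
    (g : V → ℤ)
    (hgbij : Set.BijOn g Set.univ (Set.Icc 1 (Fintype.card V : ℤ)))
    (hgwt : ∀ v, wt EG g v = 0)
    (h : W → ℤ)
    (hhbij : Set.BijOn h Set.univ
      (Set.Icc ((Fintype.card V : ℤ) + 1) ((Fintype.card V : ℤ) + (Fintype.card W : ℤ))))
    (hk : ∀ v, |wt EH h v| ≤ (Fintype.card V : ℤ))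
    (hsum : ∀ i : ℤ, 0 ≤ i →
      (∑ v ∈ Finset.univ.filter (fun v => wt EH h v = i), h v) =
        ∑ v ∈ Finset.univ.filter (fun v => wt EH h v = -i), h v)
    (EK : (V ⊕ W) → (V ⊕ W) → Prop)
    (hKGG : ∀ a b : V, EK (Sum.inl a) (Sum.inl b) ↔ EG a b)
    (hKHH : ∀ x y : W, EK (Sum.inr x) (Sum.inr y) ↔ EH x y)
    (hKGH : ∀ (a : V) (x : W), EK (Sum.inl a) (Sum.inr x) ↔ wt EH h x = -(g a))
    (hKHG : ∀ (a : V) (x : W), EK (Sum.inr x) (Sum.inl a) ↔ wt EH h x = g a) :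
    Set.BijOn (Sum.elim g h) Set.univ
        (Set.Icc 1 ((Fintype.card V : ℤ) + (Fintype.card W : ℤ))) ∧
      ∀ v, wt EK (Sum.elim g h) v = 0 := by
  classical
  have hn : ∀ a : V, g a ∈ Set.Icc 1 ((Fintype.card V : ℤ)) :=
    fun a => hgbij.mapsTo (Set.mem_univ a)
  have hm : ∀ x : W, h x ∈ Set.Icc ((Fintype.card V : ℤ) + 1)
      ((Fintype.card V : ℤ) + (Fintype.card W : ℤ)) :=
    fun x => hhbij.mapsTo (Set.mem_univ x)
  have hm0 : (0 : ℤ) ≤ (Fintype.card W : ℤ) := by positivity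
  have hn0 : (0 : ℤ) ≤ (Fintype.card V : ℤ) := by positivity
  have gfil : ∀ j : ℤ, (∑ a : V, if g a = j then g a else 0) =
      if 1 ≤ j ∧ j ≤ (Fintype.card V : ℤ) then j else 0 := by
    intro j
    split_ifs with hj
    · obtain ⟨a, -, ha⟩ := hgbij.surjOn (show j ∈ Set.Icc 1 _ from ⟨hj.1, hj.2⟩)
      rw [Finset.sum_eq_single a]
      · simp [ha]
      · intro b _ hb
        rw [if_neg]
        intro hgb
        exact hb (hgbij.injOn (Set.mem_univ b) (Set.mem_univ a) (hgb.trans ha.symm))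
      · simp
    · apply Finset.sum_eq_zero
      intro b _
      rw [if_neg]
      intro hgb
      have := hn b
      simp [Set.mem_Icc] at this
      omega
  constructor
  · refine ⟨?_, ?_, ?_⟩
    · rintro (a | x) -
      · have := hn a
        simp only [Set.mem_Icc] at this ⊢
        simp only [Sum.elim_inl]
        omega
      · have := hm x
        simp only [Set.mem_Icc] at this ⊢
        simp only [Sum.elim_inr]
        omega
    · rintro (a | x) - (b | y) - hxy <;> simp only [Sum.elim_inl, Sum.elim_inr] at hxy
      · exact congrArg Sum.inl (hgbij.injOn (Set.mem_univ a) (Set.mem_univ b) hxy)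
      · exfalso
        have h1 := hn a; have h2 := hm y
        simp only [Set.mem_Icc] at h1 h2
        omega
      · exfalso
        have h1 := hn b; have h2 := hm x
        simp only [Set.mem_Icc] at h1 h2
        omega
      · exact congrArg Sum.inr (hhbij.injOn (Set.mem_univ x) (Set.mem_univ y) hxy)
    · intro j hj
      simp only [Set.mem_Icc] at hj
      by_cases hjn : j ≤ (Fintype.card V : ℤ)
      · obtain ⟨a, -, ha⟩ := hgbij.surjOn (show j ∈ Set.Icc 1 _ from ⟨hj.1, hjn⟩)
        exact ⟨Sum.inl a, Set.mem_univ _, ha⟩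
      · obtain ⟨x, -, hx⟩ := hhbij.surjOn (show j ∈ Set.Icc _ _ from ⟨by omega, hj.2⟩)
        exact ⟨Sum.inr x, Set.mem_univ _, hx⟩
  · rintro (a | x)
    · have hwg := hgwt a
      have hga := hn a
      simp only [Set.mem_Icc] at hga
      have hs := hsum (g a) (by omega)
      rw [Finset.sum_filter, Finset.sum_filter] at hs
      unfold wt at hwg ⊢
      rw [Fintype.sum_sum_type, Fintype.sum_sum_type]
      simp only [Sum.elim_inl, Sum.elim_inr, hKGG, hKGH, hKHG]
      linarith
    · have flip : ∀ i j : ℤ, (if i = -j then j else 0) = (if j = -i then j else 0) := by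
        intro i j; split_ifs <;> omega
      have flip2 : ∀ i j : ℤ, (if i = j then j else 0) = (if j = i then j else 0) := by
        intro i j; split_ifs <;> omega
      have hi := hk x
      rw [abs_le] at hi
      have hAB : (∑ u, if EH u x then h u else 0) - (∑ u, if EH x u then h u else 0)
          = wt EH h x := rfl
      unfold wt
      rw [Fintype.sum_sum_type, Fintype.sum_sum_type]
      simp only [Sum.elim_inl, Sum.elim_inr, hKHH, hKGH, hKHG]
      rw [show (fun a => if wt EH h x = -(g a) then g a else 0)
            = (fun a => if g a = -(wt EH h x) then g a else 0) from funext fun a => flip _ _,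
          show (fun a => if wt EH h x = g a then g a else 0)
            = (fun a => if g a = wt EH h x then g a else 0) from funext fun a => flip2 _ _,
          gfil, gfil]
      split_ifs <;> omega
end

section
/- Let G be a DDMOG on n vertices in which every vertex has imbalance 0, with DDM labeling g. Let H be an oriented graph on m vertices with a bijective labeling h: V(H) → {1,...,m} such that every vertex v of H satisfies either wt_h(v) = 0 or m+1 ≤ |wt_h(v)| ≤ m+n, and for each 1 ≤ i ≤ n, Σ_{v: wt_h(v)=i+m} h(v) = Σ_{v: wt_h(v)=-i-m} h(v). Form the graph K by taking the disjoint union of G and H and adding, for each 1 ≤ i ≤ n, an edge from the vertex v_i of G with g(v_i) = i to each u ∈ H with wt_h(u) = -(i+m), and an edge to v_i from each u with wt_h(u) = i+m. Then f defined by f(u) = h(u) for u ∈ H and f(u) = g(u)+m for u ∈ G is a DDM labeling of K, so K is a DDMOG on n+m vertices. -/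
open Classical Finset

theorem weighted_sum_shifted_DDM {V W : Type*} [Fintype V] [Fintype W]
    (EG : V → V → Prop) (EH : W → W → Prop)
    (horG : ∀ u v, EG u v → ¬ EG v u)
    (horH : ∀ u v, EH u v → ¬ EH v u)
    (hbal : ∀ v, imb EG v = 0)
    (g : V → ℤ)
    (hgbij : Set.BijOn g Set.univ (Set.Icc 1 (Fintype.card V : ℤ)))
    (hgwt : ∀ v, wt EG g v = 0)
    (h : W → ℤ)
    (hhbij : Set.BijOn h Set.univ (Set.Icc 1 (Fintype.card W : ℤ)))
    (hwtH : ∀ v, wt EH h v = 0 ∨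
      ((Fintype.card W : ℤ) + 1 ≤ |wt EH h v| ∧
        |wt EH h v| ≤ (Fintype.card W : ℤ) + (Fintype.card V : ℤ)))
    (hsum : ∀ i : ℤ, 1 ≤ i → i ≤ (Fintype.card V : ℤ) →
      (∑ v ∈ Finset.univ.filter (fun v => wt EH h v = i + (Fintype.card W : ℤ)), h v) =
        ∑ v ∈ Finset.univ.filter (fun v => wt EH h v = -(i + (Fintype.card W : ℤ))), h v)
    (EK : (V ⊕ W) → (V ⊕ W) → Prop)
    (hKGG : ∀ a b : V, EK (Sum.inl a) (Sum.inl b) ↔ EG a b)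
    (hKHH : ∀ x y : W, EK (Sum.inr x) (Sum.inr y) ↔ EH x y)
    (hKGH : ∀ (a : V) (x : W),
      EK (Sum.inl a) (Sum.inr x) ↔ wt EH h x = -(g a + (Fintype.card W : ℤ)))
    (hKHG : ∀ (a : V) (x : W),
      EK (Sum.inr x) (Sum.inl a) ↔ wt EH h x = g a + (Fintype.card W : ℤ)) :
    Set.BijOn (Sum.elim (fun v => g v + (Fintype.card W : ℤ)) h) Set.univ
        (Set.Icc 1 ((Fintype.card V : ℤ) + (Fintype.card W : ℤ))) ∧
      ∀ v, wt EK (Sum.elim (fun v => g v + (Fintype.card W : ℤ)) h) v = 0 := by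
  set n : ℤ := (Fintype.card V : ℤ) with hn
  set m : ℤ := (Fintype.card W : ℤ) with hm
  have hm0 : 0 ≤ m := hm ▸ Int.natCast_nonneg _
  have hg1 : ∀ a : V, 1 ≤ g a ∧ g a ≤ n := fun a => hgbij.1 (Set.mem_univ a)
  have hh1 : ∀ x : W, 1 ≤ h x ∧ h x ≤ m := fun x => hhbij.1 (Set.mem_univ x)
  have gsum : ∀ c : ℤ, 1 ≤ c - m → c - m ≤ n →
      (∑ b : V, if c = g b + m then g b + m else 0) = c := by
    intro c h1 h2
    obtain ⟨a₀, -, ha₀⟩ := hgbij.2.2 (show (c - m) ∈ Set.Icc 1 n from ⟨h1, h2⟩)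
    have hiff : ∀ b, (c = g b + m) ↔ b = a₀ := by
      intro b
      constructor
      · intro he
        exact hgbij.2.1 (Set.mem_univ b) (Set.mem_univ a₀) (by omega)
      · rintro rfl; omega
    calc (∑ b : V, if c = g b + m then g b + m else 0)
        = ∑ b : V, if b = a₀ then g b + m else 0 :=
          Finset.sum_congr rfl fun b _ => if_congr (hiff b) rfl rfl
      _ = g a₀ + m := by rw [Finset.sum_ite_eq' Finset.univ a₀]; simp
      _ = c := by omega
  have gsum' : ∀ c : ℤ, 1 ≤ -c - m → -c - m ≤ n →
      (∑ b : V, if c = -(g b + m) then g b + m else 0) = -c := by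
    intro c h1 h2
    obtain ⟨a₀, -, ha₀⟩ := hgbij.2.2 (show (-c - m) ∈ Set.Icc 1 n from ⟨h1, h2⟩)
    have hiff : ∀ b, (c = -(g b + m)) ↔ b = a₀ := by
      intro b
      constructor
      · intro he
        exact hgbij.2.1 (Set.mem_univ b) (Set.mem_univ a₀) (by omega)
      · rintro rfl; omega
    calc (∑ b : V, if c = -(g b + m) then g b + m else 0)
        = ∑ b : V, if b = a₀ then g b + m else 0 :=
          Finset.sum_congr rfl fun b _ => if_congr (hiff b) rfl rfl
      _ = g a₀ + m := by rw [Finset.sum_ite_eq' Finset.univ a₀]; simp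
      _ = -c := by omega
  constructor
  · refine ⟨?_, ?_, ?_⟩
    · rintro (a | x) -
      · simp only [Sum.elim_inl, Set.mem_Icc]
        obtain ⟨h1, h2⟩ := hg1 a
        omega
      · simp only [Sum.elim_inr, Set.mem_Icc]
        obtain ⟨h1, h2⟩ := hh1 x
        have : 0 ≤ n := hn ▸ Int.natCast_nonneg _
        omega
    · rintro (a | x) - (b | y) - heq
      · simp only [Sum.elim_inl] at heq
        exact congrArg Sum.inl
          (hgbij.2.1 (Set.mem_univ a) (Set.mem_univ b) (by omega))
      · simp only [Sum.elim_inl, Sum.elim_inr] at heq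
        obtain ⟨h1, h2⟩ := hg1 a
        obtain ⟨h3, h4⟩ := hh1 y
        omega
      · simp only [Sum.elim_inl, Sum.elim_inr] at heq
        obtain ⟨h1, h2⟩ := hg1 b
        obtain ⟨h3, h4⟩ := hh1 x
        omega
      · simp only [Sum.elim_inr] at heq
        exact congrArg Sum.inr (hhbij.2.1 (Set.mem_univ x) (Set.mem_univ y) heq)
    · intro k hk
      rw [Set.mem_Icc] at hk
      by_cases hk2 : k ≤ m
      · obtain ⟨x, -, hx⟩ := hhbij.2.2 (show k ∈ Set.Icc 1 m from ⟨hk.1, hk2⟩)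
        exact ⟨Sum.inr x, Set.mem_univ _, by simpa using hx⟩
      · obtain ⟨a, -, ha⟩ :=
          hgbij.2.2 (show k - m ∈ Set.Icc 1 n from ⟨by omega, by omega⟩)
        exact ⟨Sum.inl a, Set.mem_univ _, by simp only [Sum.elim_inl]; omega⟩
  · rintro (a | x)
    · -- vertex in G
      have t1 : (∑ b : V, if EK (Sum.inl b) (Sum.inl a) then g b + m else 0)
          = (∑ b : V, if EG b a then g b else 0)
            + m * (∑ b : V, if EG b a then (1 : ℤ) else 0) := by
        rw [Finset.mul_sum, ← Finset.sum_add_distrib]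
        refine Finset.sum_congr rfl fun b _ => ?_
        simp only [hKGG]
        by_cases hb : EG b a <;> simp [hb] <;> ring
      have t2 : (∑ b : V, if EK (Sum.inl a) (Sum.inl b) then g b + m else 0)
          = (∑ b : V, if EG a b then g b else 0)
            + m * (∑ b : V, if EG a b then (1 : ℤ) else 0) := by
        rw [Finset.mul_sum, ← Finset.sum_add_distrib]
        refine Finset.sum_congr rfl fun b _ => ?_
        simp only [hKGG]
        by_cases hb : EG a b <;> simp [hb] <;> ring
      have t3 : (∑ x : W, if EK (Sum.inr x) (Sum.inl a) then h x else 0)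
          = ∑ x ∈ Finset.univ.filter (fun x => wt EH h x = g a + m), h x := by
        rw [Finset.sum_filter]
        refine Finset.sum_congr rfl fun x _ => ?_
        simp only [hKHG]
      have t4 : (∑ x : W, if EK (Sum.inl a) (Sum.inr x) then h x else 0)
          = ∑ x ∈ Finset.univ.filter (fun x => wt EH h x = -(g a + m)), h x := by
        rw [Finset.sum_filter]
        refine Finset.sum_congr rfl fun x _ => ?_
        simp only [hKGH]
      have e1 := hgwt a
      have e2 := hbal a
      have e3 := hsum (g a) (hg1 a).1 (hg1 a).2
      rw [wt] at e1
      rw [imb] at e2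
      rw [wt, Fintype.sum_sum_type, Fintype.sum_sum_type]
      simp only [Sum.elim_inl, Sum.elim_inr]
      rw [t1, t3, t2, t4]
      rw [e3]
      have e2' : m * (∑ b : V, if EG b a then (1 : ℤ) else 0)
          = m * (∑ b : V, if EG a b then (1 : ℤ) else 0) := by
        have : (∑ b : V, if EG b a then (1 : ℤ) else 0)
            = ∑ b : V, if EG a b then (1 : ℤ) else 0 := by linarith [e2]
        rw [this]
      linarith [e1, e2']
    · -- vertex in H
      have t1 : (∑ b : V, if EK (Sum.inl b) (Sum.inr x) then g b + m else 0)
          = ∑ b : V, if wt EH h x = -(g b + m) then g b + m else 0 := by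
        refine Finset.sum_congr rfl fun b _ => ?_
        simp only [hKGH]
      have t2 : (∑ y : W, if EK (Sum.inr y) (Sum.inr x) then h y else 0)
          = ∑ y : W, if EH y x then h y else 0 := by
        refine Finset.sum_congr rfl fun y _ => ?_
        simp only [hKHH]
      have t3 : (∑ b : V, if EK (Sum.inr x) (Sum.inl b) then g b + m else 0)
          = ∑ b : V, if wt EH h x = g b + m then g b + m else 0 := by
        refine Finset.sum_congr rfl fun b _ => ?_
        simp only [hKHG]
      have t4 : (∑ y : W, if EK (Sum.inr x) (Sum.inr y) then h y else 0)
          = ∑ y : W, if EH x y then h y else 0 := by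
        refine Finset.sum_congr rfl fun y _ => ?_
        simp only [hKHH]
      have hw : (∑ y : W, if EH y x then h y else 0)
          - (∑ y : W, if EH x y then h y else 0) = wt EH h x := by rw [wt]
      rw [wt, Fintype.sum_sum_type, Fintype.sum_sum_type]
      simp only [Sum.elim_inl, Sum.elim_inr]
      rw [t1, t2, t3, t4]
      rcases hwtH x with h0 | ⟨hlo, hhi⟩
      · have s1 : (∑ b : V, if wt EH h x = -(g b + m) then g b + m else 0) = 0 :=
          Finset.sum_eq_zero fun b _ => if_neg (by have := hg1 b; omega)
        have s2 : (∑ b : V, if wt EH h x = g b + m then g b + m else 0) = 0 :=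
          Finset.sum_eq_zero fun b _ => if_neg (by have := hg1 b; omega)
        rw [s1, s2]
        linarith [hw, h0]
      · by_cases hpos : 0 < wt EH h x
        · rw [abs_of_pos hpos] at hlo hhi
          have s1 : (∑ b : V, if wt EH h x = -(g b + m) then g b + m else 0) = 0 :=
            Finset.sum_eq_zero fun b _ => if_neg (by have := hg1 b; omega)
          have s2 := gsum (wt EH h x) (by omega) (by omega)
          rw [s1, s2]
          linarith [hw]
        · have hneg : wt EH h x < 0 := by
            rcases lt_trichotomy (wt EH h x) 0 with hc | hc | hc
            · exact hc
            · exfalso; rw [hc] at hlo; simp at hlo; omega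
            · exact absurd hc hpos
          rw [abs_of_neg hneg] at hlo hhi
          have s1 := gsum' (wt EH h x) (by omega) (by omega)
          have s2 : (∑ b : V, if wt EH h x = g b + m then g b + m else 0) = 0 :=
            Finset.sum_eq_zero fun b _ => if_neg (by have := hg1 b; omega)
          rw [s1, s2]
          linarith [hw]
end

section
/- No orientation of the cycle C_n (n ≥ 3) admits a DDM labeling; i.e., the undirected cycle is not difference distance magic orientable. -/
open Classical Finset

theorem cycle_not_DDMO (n : ℕ) (hn : 3 ≤ n)
    (E : Fin n → Fin n → Prop)
    (horiented : ∀ u v, E u v → ¬ E v u)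
    (hcycle : ∀ i j : Fin n, (E i j ∨ E j i) ↔ ((j : ℕ) = ((i : ℕ) + 1) % n ∨ (i : ℕ) = ((j : ℕ) + 1) % n)) :
    ¬ ∃ f : Fin n → ℤ,
        Set.BijOn f Set.univ (Set.Icc 1 (n : ℤ)) ∧ ∀ v, wt E f v = 0 := by
  rintro ⟨f, hf, hw⟩
  set v : Fin n := ⟨0, by omega⟩ with hv
  set a : Fin n := ⟨1, by omega⟩ with ha
  set b : Fin n := ⟨n - 1, by omega⟩ with hb
  have hav : (a : ℕ) = 1 := rfl
  have hbv : (b : ℕ) = n - 1 := rfl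
  have hvv : (v : ℕ) = 0 := rfl
  have hab : a ≠ b := by
    intro h; have := congrArg (Fin.val) h; rw [hav, hbv] at this; omega
  -- edges between v and a, and v and b
  have hva : E v a ∨ E a v := by
    rw [hcycle]; left; rw [hav, hvv]; exact (Nat.mod_eq_of_lt (by omega)).symm
  have hvb : E b v ∨ E v b := by
    rw [hcycle]; left; rw [hbv, hvv]
    have : n - 1 + 1 = n := by omega
    rw [this, Nat.mod_self]
  -- no other arcs at v
  have hnov : ∀ u : Fin n, u ≠ a → u ≠ b → ¬ (E u v ∨ E v u) := by
    intro u hua hub hE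
    rcases (hcycle u v).mp hE with h1 | h2
    · rw [hvv] at h1
      have hun : (u : ℕ) + 1 = n := by
        rcases Nat.lt_or_ge ((u : ℕ) + 1) n with h | h
        · rw [Nat.mod_eq_of_lt h] at h1; omega
        · have := u.isLt; omega
      exact hub (Fin.ext (by rw [hbv]; omega))
    · rw [hvv, Nat.mod_eq_of_lt (by omega : 0 + 1 < n)] at h2
      exact hua (Fin.ext (by rw [hav]; omega))
  have hno_in : ∀ u : Fin n, u ≠ a → u ≠ b → ¬ E u v := fun u h1 h2 hE =>
    hnov u h1 h2 (Or.inl hE)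
  have hno_out : ∀ u : Fin n, u ≠ a → u ≠ b → ¬ E v u := fun u h1 h2 hE =>
    hnov u h1 h2 (Or.inr hE)
  -- compute the weight of v
  have hsum_in : (∑ u, if E u v then f u else 0) =
      (if E a v then f a else 0) + (if E b v then f b else 0) := by
    rw [← Finset.sum_pair hab (f := fun u => if E u v then f u else 0)]
    refine (Finset.sum_subset (Finset.subset_univ _) ?_).symm
    intro x _ hx
    simp only [Finset.mem_insert, Finset.mem_singleton, not_or] at hx
    rw [if_neg (hno_in x hx.1 hx.2)]
  have hsum_out : (∑ u, if E v u then f u else 0) =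
      (if E v a then f a else 0) + (if E v b then f b else 0) := by
    rw [← Finset.sum_pair hab (f := fun u => if E v u then f u else 0)]
    refine (Finset.sum_subset (Finset.subset_univ _) ?_).symm
    intro x _ hx
    simp only [Finset.mem_insert, Finset.mem_singleton, not_or] at hx
    rw [if_neg (hno_out x hx.1 hx.2)]
  have hwv := hw v
  rw [wt, hsum_in, hsum_out] at hwv
  -- labels are positive
  have hfa : 1 ≤ f a := (hf.1 (Set.mem_univ a)).1
  have hfb : 1 ≤ f b := (hf.1 (Set.mem_univ b)).1
  -- injectivity
  have hinj : f a = f b → False := fun h => hab (hf.2.1 (Set.mem_univ a) (Set.mem_univ b) h)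
  rcases hva with h1 | h1 <;> rcases hvb with h2 | h2
  · -- E v a, E b v
    rw [if_neg (horiented v a h1), if_pos h2, if_pos h1,
      if_neg (horiented b v h2)] at hwv
    exact hinj (by omega)
  · -- E v a, E v b
    rw [if_neg (horiented v a h1), if_neg (horiented v b h2), if_pos h1, if_pos h2] at hwv
    omega
  · -- E a v, E b v
    rw [if_pos h1, if_pos h2, if_neg (horiented a v h1), if_neg (horiented b v h2)] at hwv
    omega
  · -- E a v, E v b
    rw [if_pos h1, if_neg (horiented v b h2), if_neg (horiented a v h1), if_pos h2] at hwv
    exact hinj (by omega)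
end

section
/- If G is a connected oriented graph with at least 2 vertices admitting a DDM labeling, then every vertex of G is incident to at least three arcs, and for every vertex both the in-neighborhood and the out-neighborhood are nonempty. -/
open Classical Finset

theorem DDM_min_degree_three {V : Type*} [Fintype V]
    (E : V → V → Prop)
    (horiented : ∀ u v, E u v → ¬ E v u)
    (G : SimpleGraph V)
    (hadj : ∀ u v, G.Adj u v ↔ (E u v ∨ E v u))
    (hconn : G.Connected)
    (hcard : 2 ≤ Fintype.card V)
    (f : V → ℤ)
    (hbij : Set.BijOn f Set.univ (Set.Icc 1 (Fintype.card V : ℤ)))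
    (hwt : ∀ v, wt E f v = 0) :
    ∀ v, 3 ≤ (Finset.univ.filter (fun u => E u v)).card +
            (Finset.univ.filter (fun u => E v u)).card ∧
      (∃ u, E u v) ∧ (∃ u, E v u) := by
  have hinj : Function.Injective f := by
    exact fun x y hxy => hbij.injOn (Set.mem_univ x) (Set.mem_univ y) hxy
  have hpos : ∀ u, 1 ≤ f u := fun u => (hbij.mapsTo (Set.mem_univ u)).1
  intro v
  set A := Finset.univ.filter (fun u => E u v) with hA
  set B := Finset.univ.filter (fun u => E v u) with hB
  have hsum : ∑ u ∈ A, f u = ∑ u ∈ B, f u := by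
    have := hwt v
    unfold wt at this
    rw [sub_eq_zero] at this
    simpa [hA, hB, Finset.sum_filter] using this
  -- sum lower bounds
  have hsumA : ∀ (S : Finset V), (S.card : ℤ) ≤ ∑ u ∈ S, f u := by
    intro S
    calc (S.card : ℤ) = ∑ _u ∈ S, 1 := by simp
    _ ≤ ∑ u ∈ S, f u := Finset.sum_le_sum fun u _ => hpos u
  -- some neighbor exists
  have hnbr : A.Nonempty ∨ B.Nonempty := by
    obtain ⟨u, hu⟩ := Fintype.exists_ne_of_one_lt_card (by omega) v
    have hreach := hconn.preconnected v u
    obtain ⟨w⟩ := hreach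
    cases w with
    | nil => exact absurd rfl (Ne.symm hu)
    | @cons _ x _ h p =>
      rcases (hadj _ _).1 h with h1 | h1
      · exact Or.inr ⟨x, by simp [hB, h1]⟩
      · exact Or.inl ⟨x, by simp [hA, h1]⟩
  have hAne : A.Nonempty ∧ B.Nonempty := by
    constructor
    · rcases hnbr with h | h
      · exact h
      · by_contra hAe
        rw [Finset.not_nonempty_iff_eq_empty] at hAe
        have h1 : (1 : ℤ) ≤ ∑ u ∈ B, f u := le_trans (by exact_mod_cast h.card_pos) (hsumA B)
        rw [← hsum, hAe] at h1
        simp at h1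
    · rcases hnbr with h | h
      · by_contra hBe
        rw [Finset.not_nonempty_iff_eq_empty] at hBe
        have h1 : (1 : ℤ) ≤ ∑ u ∈ A, f u := le_trans (by exact_mod_cast h.card_pos) (hsumA A)
        rw [hsum, hBe] at h1
        simp at h1
      · exact h
  obtain ⟨⟨a, ha⟩, ⟨b, hb⟩⟩ := hAne
  have haE : E a v := by simpa [hA] using ha
  have hbE : E v b := by simpa [hB] using hb
  refine ⟨?_, ⟨a, haE⟩, ⟨b, hbE⟩⟩
  by_contra hlt
  push_neg at hlt
  have hA1 : A.card = 1 := by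
    have := Finset.card_pos.2 ⟨a, ha⟩
    have := Finset.card_pos.2 ⟨b, hb⟩
    omega
  have hB1 : B.card = 1 := by
    have := Finset.card_pos.2 ⟨a, ha⟩
    have := Finset.card_pos.2 ⟨b, hb⟩
    omega
  have hAeq : A = {a} := Finset.eq_singleton_iff_unique_mem.2 ⟨ha, fun x hx => by
    have := Finset.card_le_one.1 (le_of_eq hA1) x hx a ha; exact this⟩
  have hBeq : B = {b} := Finset.eq_singleton_iff_unique_mem.2 ⟨hb, fun x hx => by
    have := Finset.card_le_one.1 (le_of_eq hB1) x hx b hb; exact this⟩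
  rw [hAeq, hBeq] at hsum
  simp at hsum
  have hab : a = b := hinj hsum
  exact horiented a v haE (hab ▸ hbE)
end
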